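/- Let A and B be rings, M an (A,B)-bimodule that is finitely generated projective as a right B-module, N a (B,A)-bimodule that is finitely generated projective as a left B-module, and η : M ⊗_B N → A an injective (A,A)-bimodule homomorphism. Assume: (i) if b ∈ B satisfies η(mb ⊗ n) = 0 for all m ∈ M and n ∈ N, then b = 0; (ii) if m ∈ M satisfies η(m ⊗ n) = 0 for all n ∈ N, then m = 0; (iii) if n ∈ N satisfies η(m ⊗ n) = 0 for all m ∈ M, then n = 0. Let Tr_{B^op}(M) ⊆ B be the two-sided ideal generated by the images g(M) over all right B-linear maps g : M → B, and Tr_B(N) ⊆ B the two-sided ideal generated by the images f(N) over all left B-linear maps f : N → B, and assume M·Tr_B(N) = M and Tr_{B^op}(M)·N = N. Then there exists a unique (B,B)-bimodule homomorphism ρ : N ⊗_A M → B such that (M, N, η, ρ) is a Morita context between A and B. -/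

import Mathlib

/-!
For `n ∈ N` and `m ∈ M` the first associativity law forces `ρ(n ⊗ m)` to be an element `b ∈ B`
acting on `M` from the right as `x ↦ η(x ⊗ n) m`; by condition (i) there is at most one such
`b`. When `m = m₀ f(n₀)` with `f : N → B` left `B`-linear, `b = f(n η(m₀ ⊗ n₀))` works: the
element `x ⊗ n η(m₀ ⊗ n₀) - η(x ⊗ n) m₀ ⊗ n₀` is killed by `η`, hence vanishes in `M ⊗_B N`,
and applying `x ⊗ y ↦ x f(y)` to it gives the required identity. Since such `m` generate `M`,
every `ρ(n ⊗ m)` exists, and uniqueness of the values makes `ρ` bilinear, balanced and unique.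
The second associativity law then follows from condition (iii).
-/

open MulOpposite
open scoped TensorProduct

universe u

section EtaSetup

variable (A B M N : Type u) [Ring A] [Ring B]
  [AddCommGroup M] [AddCommGroup N]
  [Module A M] [Module Bᵐᵒᵖ M] [SMulCommClass A Bᵐᵒᵖ M]
  [Module B N] [Module Aᵐᵒᵖ N] [SMulCommClass B Aᵐᵒᵖ N]

/-- An `(A,A)`-bimodule homomorphism `η : M ⊗[B] N → A`, presented via the corresponding
`B`-balanced biadditive `A`-bilinear pairing `eta : M → N → A`. -/
structure EtaPairing where
  eta : M → N → A
  eta_add_left : ∀ m m' n, eta (m + m') n = eta m n + eta m' n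
  eta_add_right : ∀ m n n', eta m (n + n') = eta m n + eta m n'
  eta_smul_left : ∀ (a : A) m n, eta (a • m) n = a * eta m n
  eta_smul_right : ∀ (a : A) m n, eta m (op a • n) = eta m n * a
  eta_balanced : ∀ (b : B) m n, eta (op b • m) n = eta m (b • n)

variable {A B M N}
variable (P : EtaPairing A B M N)

/-- The pairing `η` as a biadditive map. -/
def etaAddHom : M →+ N →+ A :=
  AddMonoidHom.mk'
    (fun m => AddMonoidHom.mk' (fun n => P.eta m n) (fun n n' => P.eta_add_right m n n'))
    (fun m m' => by ext n; simp [P.eta_add_left])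

/-- The map induced by `η` on the `ℤ`-tensor product `M ⊗[ℤ] N`. -/
noncomputable def etaLift : M ⊗[ℤ] N →+ A :=
  TensorProduct.liftAddHom (etaAddHom P) (fun z m n => by simp [map_zsmul])

/-- The subgroup of balancing relations defining `M ⊗[B] N` as a quotient of
`M ⊗[ℤ] N`; the map `η : M ⊗[B] N → A` is injective iff the kernel of `etaLift` is
contained in this subgroup. -/
noncomputable def balancedRel : AddSubgroup (M ⊗[ℤ] N) :=
  AddSubgroup.closure {x : M ⊗[ℤ] N |
    ∃ (b : B) (m : M) (n : N), x = (op b • m) ⊗ₜ[ℤ] n - m ⊗ₜ[ℤ] (b • n)}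

lemma eta_zero_left (n : N) : P.eta 0 n = 0 :=
  DFunLike.congr_fun (map_zero (etaAddHom P)) n

lemma eta_sub_right (m : M) (n n' : N) : P.eta m (n - n') = P.eta m n - P.eta m n' :=
  (etaAddHom P m).map_sub n n'

lemma etaLift_tmul (m : M) (n : N) : etaLift P (m ⊗ₜ[ℤ] n) = P.eta m n :=
  TensorProduct.liftAddHom_tmul _ _ _ _

noncomputable def rightActionLift (f : N →ₗ[B] B) : M ⊗[ℤ] N →+ M :=
  TensorProduct.liftAddHom
    (AddMonoidHom.mk'
      (fun x => AddMonoidHom.mk' (fun y => op (f y) • x)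
        (fun y y' => by simp only [map_add, op_add, add_smul]))
      (fun x x' => by ext y; simp only [AddMonoidHom.mk'_apply, AddMonoidHom.add_apply, smul_add]))
    (fun z x y => by
      show op (f y) • (z • x) = op (f (z • y)) • x
      rw [map_zsmul, op_smul, smul_assoc]
      exact smul_comm _ _ _)

lemma rightActionLift_tmul (f : N →ₗ[B] B) (x : M) (y : N) :
    rightActionLift (M := M) f (x ⊗ₜ[ℤ] y) = op (f y) • x :=
  TensorProduct.liftAddHom_tmul _ _ _ _

lemma balancedRel_le_ker_rightActionLift (f : N →ₗ[B] B) :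
    balancedRel (B := B) (M := M) (N := N) ≤ (rightActionLift f).ker := by
  refine (AddSubgroup.closure_le _).mpr ?_
  rintro _ ⟨b, m, n, rfl⟩
  rw [SetLike.mem_coe, AddMonoidHom.mem_ker, map_sub, rightActionLift_tmul, rightActionLift_tmul,
    map_smul, smul_smul, sub_eq_zero]
  rfl

/-- The first associativity law with `b` in place of `ρ(n ⊗ m)`. -/
def EtaPairing.IsRhoValue (n : N) (m : M) (b : B) : Prop :=
  ∀ x : M, op b • x = P.eta x n • m

namespace EtaPairing.IsRhoValue

variable {P}
variable {n n' : N} {m m' : M} {b b' : B}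

lemma eq (hB' : ∀ b : B, (∀ (m : M) (n : N), P.eta (op b • m) n = 0) → b = 0)
    (h : P.IsRhoValue n m b) (h' : P.IsRhoValue n m b') : b = b' := by
  refine sub_eq_zero.mp (hB' _ fun x y => ?_)
  rw [op_sub, sub_smul, h x, h' x, sub_self, eta_zero_left]

lemma add_left (h : P.IsRhoValue n m b) (h' : P.IsRhoValue n' m b') :
    P.IsRhoValue (n + n') m (b + b') := fun x => by
  rw [op_add, add_smul, h x, h' x, ← add_smul, ← P.eta_add_right]

lemma zero_right (n : N) : P.IsRhoValue n 0 0 := fun x => by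
  rw [op_zero, zero_smul, smul_zero]

lemma add_right (h : P.IsRhoValue n m b) (h' : P.IsRhoValue n m' b') :
    P.IsRhoValue n (m + m') (b + b') := fun x => by
  rw [op_add, add_smul, h x, h' x, smul_add]

lemma neg_right (h : P.IsRhoValue n m b) : P.IsRhoValue n (-m) (-b) := fun x => by
  rw [op_neg, neg_smul, h x, smul_neg]

lemma smul_left (b₀ : B) (h : P.IsRhoValue n m b) : P.IsRhoValue (b₀ • n) m (b₀ * b) :=
  fun x => by rw [op_mul, mul_smul, h, P.eta_balanced]

lemma op_smul_right (b₀ : B) (h : P.IsRhoValue n m b) :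
    P.IsRhoValue n (op b₀ • m) (b * b₀) := fun x => by
  rw [op_mul, mul_smul, h]
  exact (smul_comm _ _ _).symm

lemma op_smul_left_iff (a : A) : P.IsRhoValue (op a • n) m b ↔ P.IsRhoValue n (a • m) b := by
  simp only [EtaPairing.IsRhoValue, P.eta_smul_right, mul_smul]

lemma smul_eq (hN' : ∀ n : N, (∀ m : M, P.eta m n = 0) → n = 0)
    (h : P.IsRhoValue n m b) (n' : N) : b • n' = op (P.eta m n') • n := by
  refine sub_eq_zero.mp (hN' _ fun x => ?_)
  rw [eta_sub_right, ← P.eta_balanced, h, P.eta_smul_left, P.eta_smul_right, sub_self]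

end EtaPairing.IsRhoValue

lemma isRhoValue_op_smul
    (heta_inj : ∀ x : M ⊗[ℤ] N, etaLift P x = 0 →
      x ∈ balancedRel (B := B) (M := M) (N := N))
    (f : N →ₗ[B] B) (n n₀ : N) (m₀ : M) :
    P.IsRhoValue n (op (f n₀) • m₀) (f (op (P.eta m₀ n₀) • n)) := fun x => by
  let z := x ⊗ₜ[ℤ] (op (P.eta m₀ n₀) • n) - (P.eta x n • m₀) ⊗ₜ[ℤ] n₀
  have hz : etaLift P z = 0 := by
    rw [map_sub, etaLift_tmul, etaLift_tmul, P.eta_smul_right, P.eta_smul_left, sub_self]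
  have := balancedRel_le_ker_rightActionLift f (heta_inj z hz)
  rw [AddMonoidHom.mem_ker, map_sub, rightActionLift_tmul, rightActionLift_tmul, sub_eq_zero]
    at this
  rw [this]
  exact (smul_comm _ _ _).symm

lemma exists_isRhoValue
    (heta_inj : ∀ x : M ⊗[ℤ] N, etaLift P x = 0 →
      x ∈ balancedRel (B := B) (M := M) (N := N))
    (hMacc : AddSubgroup.closure
      {x : M | ∃ (f : N →ₗ[B] B) (n : N) (m : M), x = op (f n) • m} = ⊤)
    (n : N) (m : M) : ∃ b, P.IsRhoValue n m b := by
  have hm : m ∈ AddSubgroup.closure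
      {x : M | ∃ (f : N →ₗ[B] B) (n : N) (m : M), x = op (f n) • m} := hMacc ▸ trivial
  induction hm using AddSubgroup.closure_induction with
  | mem x hx =>
    obtain ⟨f, n₀, m₀, rfl⟩ := hx
    exact ⟨_, isRhoValue_op_smul P heta_inj f n n₀ m₀⟩
  | zero => exact ⟨0, .zero_right n⟩
  | add x y _ _ hx hy =>
    obtain ⟨b, hb⟩ := hx
    obtain ⟨b', hb'⟩ := hy
    exact ⟨b + b', hb.add_right hb'⟩
  | neg x _ hx =>
    obtain ⟨b, hb⟩ := hx
    exact ⟨-b, hb.neg_right⟩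

theorem exists_unique_rho_completing_morita_context
    (heta_inj : ∀ x : M ⊗[ℤ] N, etaLift P x = 0 →
      x ∈ balancedRel (B := B) (M := M) (N := N))
    (hB' : ∀ b : B, (∀ (m : M) (n : N), P.eta (op b • m) n = 0) → b = 0)
    (hN' : ∀ n : N, (∀ m : M, P.eta m n = 0) → n = 0)
    (hMacc : AddSubgroup.closure
      {x : M | ∃ (f : N →ₗ[B] B) (n : N) (m : M), x = op (f n) • m} = ⊤) :
    ∃! rho : N → M → B,
      (∀ n n' m, rho (n + n') m = rho n m + rho n' m) ∧
      (∀ n m m', rho n (m + m') = rho n m + rho n m') ∧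
      (∀ (b : B) n m, rho (b • n) m = b * rho n m) ∧
      (∀ (b : B) n m, rho n (op b • m) = rho n m * b) ∧
      (∀ (a : A) n m, rho (op a • n) m = rho n (a • m)) ∧
      (∀ m n m', P.eta m n • m' = op (rho n m') • m) ∧
      (∀ n m n', rho n m • n' = op (P.eta m n') • n) := by
  choose rho hrho using exists_isRhoValue P heta_inj hMacc
  have rho_eq {n m b} (h : P.IsRhoValue n m b) : rho n m = b := (hrho n m).eq hB' h
  refine ⟨rho, ⟨fun n n' m => rho_eq ((hrho n m).add_left (hrho n' m)),
    fun n m m' => rho_eq ((hrho n m).add_right (hrho n m')),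
    fun b n m => rho_eq ((hrho n m).smul_left b),
    fun b n m => rho_eq ((hrho n m).op_smul_right b),
    fun a n m => rho_eq ((EtaPairing.IsRhoValue.op_smul_left_iff a).mpr (hrho n (a • m))),
    fun m n m' => (hrho n m' m).symm,
    fun n m n' => (hrho n m).smul_eq hN' n'⟩, ?_⟩
  rintro rho' ⟨-, -, -, -, -, hassoc, -⟩
  funext n m
  exact (rho_eq fun x => (hassoc x n m).symm).symm

end EtaSetup
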